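/- arXiv:2105.00857 — 2 statements merged into one kernel-verified Lean document; each statement's English description precedes it below -/
import Mathlib

section
/- Let G be a multigraph with a c-outgrowth (K, u, v). If the graph G' obtained from K^{(u,v)} by adding c parallel edges between u and v is θ_{2c}-minor-free, then for any S ⊆ V(K) and i ∈ {0, …, c−1}: K^{(u,v)} − S contains no θ_{i+1}-model X ∪ Y with u ∈ X and v ∈ Y if and only if G'' − S is θ_{c+i+1}-minor-free, where G'' is K^{(u,v)} with c parallel u-v edges added. -/
open Finset

attribute [local instance] Classical.propDecidable

/-- A finite loopless multigraph on vertex set `V`. -/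
structure Multigraph (V : Type) where
  E : Type
  [fintE : Fintype E]
  ends : E → Sym2 V
  loopless : ∀ e, ¬ (ends e).IsDiag

attribute [instance] Multigraph.fintE

namespace Multigraph

variable {V : Type} [Fintype V] [DecidableEq V] (G : Multigraph V)

/-- The set of edges with one endpoint in `X` and the other in `Y`. -/
noncomputable def crossing (X Y : Finset V) : Finset G.E :=
  Finset.univ.filter (fun e => ∃ x ∈ X, ∃ y ∈ Y, G.ends e = s(x, y))

/-- The set of edges with both endpoints in `S`. -/
noncomputable def inside (S : Finset V) : Finset G.E :=
  Finset.univ.filter (fun e => ∀ v ∈ G.ends e, v ∈ S)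

/-- Adjacency between two vertices. -/
def AdjV (x y : V) : Prop := ∃ e : G.E, G.ends e = s(x, y)

/-- Adjacency within a vertex subset. -/
def AdjOn (S : Finset V) (x y : V) : Prop := x ∈ S ∧ y ∈ S ∧ G.AdjV x y

/-- A vertex set is connected if it is nonempty and any two of its vertices are
joined by a path inside the set. -/
def ConnectedSet (S : Finset V) : Prop :=
  S.Nonempty ∧ ∀ x ∈ S, ∀ y ∈ S, Relation.ReflTransGen (G.AdjOn S) x y

/-- A θ_c-model: two disjoint connected vertex sets crossed by at least `c` edges. -/
def ThetaModel (c : ℕ) (X Y : Finset V) : Prop :=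
  Disjoint X Y ∧ G.ConnectedSet X ∧ G.ConnectedSet Y ∧ c ≤ (G.crossing X Y).card

/-- `G` contains θ_c as a minor. -/
def HasThetaMinor (c : ℕ) : Prop := ∃ X Y, G.ThetaModel c X Y

/-- A cut: the set of edges crossing some vertex bipartition. -/
def IsCut (F : Finset G.E) : Prop := ∃ A : Finset V, F = G.crossing A Aᶜ

/-- A bond: a minimal nonempty cut. -/
def IsBond (F : Finset G.E) : Prop :=
  G.IsCut F ∧ F.Nonempty ∧ ∀ F' ⊂ F, F'.Nonempty → ¬ G.IsCut F'

/-- Edge-degree of a vertex: number of incident edges (with multiplicity). -/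
noncomputable def edeg (v : V) : ℕ :=
  (Finset.univ.filter (fun e : G.E => v ∈ G.ends e)).card

/-- The multiplicity of the (multi-)edge between `x` and `y`. -/
noncomputable def mult (x y : V) : ℕ :=
  (Finset.univ.filter (fun e : G.E => G.ends e = s(x, y))).card

/-- The set of neighbours of a vertex. -/
noncomputable def nbrs (v : V) : Finset V := Finset.univ.filter (fun u => G.AdjV v u)

/-- The induced subgraph on a vertex subset (kept on the same vertex type;
only edges with both endpoints in `S` survive). -/
noncomputable def induce (S : Finset V) : Multigraph V where
  E := {e : G.E // ∀ v ∈ G.ends e, v ∈ S}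
  ends e := G.ends e.1
  loopless e := G.loopless e.1

/-- `S` is a c-bond cover: `G - S` is θ_c-minor-free. -/
def CBondCover (c : ℕ) (S : Finset V) : Prop :=
  ¬ (G.induce Sᶜ).HasThetaMinor c

/-- The graph `K^{(u,v)}`: the induced subgraph on `K ∪ {u,v}` with all
`u`-`v` edges removed. -/
noncomputable def outK (K : Finset V) (u v : V) : Multigraph V where
  E := {e : G.E // (∀ x ∈ G.ends e, x ∈ insert u (insert v K)) ∧ G.ends e ≠ s(u, v)}
  ends e := G.ends e.1
  loopless e := G.loopless e.1

/-- Add `i` parallel edges between the distinct vertices `u` and `v`. -/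
noncomputable def addPar (u v : V) (huv : u ≠ v) (i : ℕ) : Multigraph V where
  E := G.E ⊕ Fin i
  ends := Sum.elim G.ends (fun _ => s(u, v))
  loopless := by
    rintro (e | e)
    · exact G.loopless e
    · simpa using huv

/-- A cluster collection: a nonempty collection of pairwise disjoint,
nonempty, connected vertex subsets. -/
def ClusterCollection (𝒞 : Finset (Finset V)) : Prop :=
  𝒞.Nonempty ∧ (∀ C ∈ 𝒞, C.Nonempty ∧ G.ConnectedSet C) ∧
    (∀ C ∈ 𝒞, ∀ D ∈ 𝒞, C ≠ D → Disjoint C D)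

/-- The edges of `G` that are not internal to any cluster of `𝒞`;
these are exactly the edges surviving in `G/𝒞` when `𝒞` is a cluster partition. -/
noncomputable def interE (𝒞 : Finset (Finset V)) : Finset G.E :=
  Finset.univ.filter (fun e => ¬ ∃ C ∈ 𝒞, ∀ v ∈ G.ends e, v ∈ C)

/-- A c-outgrowth `(K, u, v)` of `G`. -/
def IsOutgrowth (c : ℕ) (K : Finset V) (u v : V) : Prop :=
  u ≠ v ∧ u ∉ K ∧ v ∉ K ∧ K.Nonempty ∧
  (G.induce (Finset.univ \ {u, v})).ConnectedSet K ∧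
  (∀ x ∈ K, ∀ y, G.AdjV x y → y ∈ K ∨ y = u ∨ y = v) ∧
  (∃ x ∈ K, G.AdjV x u) ∧ (∃ x ∈ K, G.AdjV x v) ∧
  ¬ (G.outK K u v).HasThetaMinor c

end Multigraph

namespace Multigraph

section Helpers

variable {V : Type} [Fintype V] [DecidableEq V] {M : Multigraph V}

lemma AdjV.symm' {x y : V} (h : M.AdjV x y) : M.AdjV y x := by
  obtain ⟨e, he⟩ := h
  exact ⟨e, by rw [he, Sym2.eq_swap]⟩

lemma AdjOn.symm' {X : Finset V} {x y : V} (h : M.AdjOn X x y) : M.AdjOn X y x :=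
  ⟨h.2.1, h.1, h.2.2.symm'⟩

lemma rtg_symm {X : Finset V} {x y : V}
    (h : Relation.ReflTransGen (M.AdjOn X) x y) :
    Relation.ReflTransGen (M.AdjOn X) y x :=
  by
    haveI : Std.Symm (M.AdjOn X) := ⟨fun _ _ hab => hab.symm'⟩
    exact (Relation.ReflTransGen.symmetric (r := M.AdjOn X)).symm _ _ h

lemma rtg_mono {X X' : Finset V} (hXX : X ⊆ X') {x y : V}
    (h : Relation.ReflTransGen (M.AdjOn X) x y) :
    Relation.ReflTransGen (M.AdjOn X') x y :=
  Relation.ReflTransGen.mono (r := M.AdjOn X) (p := M.AdjOn X')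
    (fun a b (hab : M.AdjOn X a b) => (⟨hXX hab.1, hXX hab.2.1, hab.2.2⟩ : M.AdjOn X' a b)) x y h

lemma crossing_comm (X Y : Finset V) : M.crossing X Y = M.crossing Y X := by
  ext e
  simp only [crossing, Finset.mem_filter, Finset.mem_univ, true_and]
  constructor <;>
    · rintro ⟨x, hx, y, hy, h⟩
      exact ⟨y, hy, x, hx, by rw [h, Sym2.eq_swap]⟩

lemma crossing_mono_right {Y Y' : Finset V} (h : Y ⊆ Y') (X : Finset V) :
    M.crossing X Y ⊆ M.crossing X Y' := by
  intro e he
  simp only [crossing, Finset.mem_filter, Finset.mem_univ, true_and] at he ⊢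
  obtain ⟨x, hx, y, hy, hxy⟩ := he
  exact ⟨x, hx, y, h hy, hxy⟩

lemma connectedSet_union {X Y : Finset V} (hX : M.ConnectedSet X) (hY : M.ConnectedSet Y)
    {p q : V} (hp : p ∈ X) (hq : q ∈ Y) (hpq : M.AdjV p q) :
    M.ConnectedSet (X ∪ Y) := by
  refine ⟨hX.1.mono Finset.subset_union_left, ?_⟩
  have hb : Relation.ReflTransGen (M.AdjOn (X ∪ Y)) p q :=
    Relation.ReflTransGen.single
      ⟨Finset.mem_union_left _ hp, Finset.mem_union_right _ hq, hpq⟩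
  have hX' : ∀ x ∈ X, Relation.ReflTransGen (M.AdjOn (X ∪ Y)) x p := fun x hx =>
    rtg_mono Finset.subset_union_left (hX.2 x hx p hp)
  have hY' : ∀ y ∈ Y, Relation.ReflTransGen (M.AdjOn (X ∪ Y)) q y := fun y hy =>
    rtg_mono Finset.subset_union_right (hY.2 q hq y hy)
  intro x hx y hy
  rcases Finset.mem_union.1 hx with hx' | hx' <;> rcases Finset.mem_union.1 hy with hy' | hy'
  · exact rtg_mono Finset.subset_union_left (hX.2 x hx' y hy')
  · exact ((hX' x hx').trans hb).trans (hY' y hy')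
  · exact rtg_symm (((hX' y hy').trans hb).trans (hY' x hx'))
  · exact rtg_mono Finset.subset_union_right (hY.2 x hx' y hy')

lemma connected_reach {X : Finset V} {u : V} (hu : u ∈ X) :
    M.ConnectedSet (X.filter (fun x => Relation.ReflTransGen (M.AdjOn X) u x)) := by
  set A := X.filter (fun x => Relation.ReflTransGen (M.AdjOn X) u x) with hA
  have huA : u ∈ A := Finset.mem_filter.2 ⟨hu, Relation.ReflTransGen.refl⟩
  have key : ∀ x, Relation.ReflTransGen (M.AdjOn X) u x →
      Relation.ReflTransGen (M.AdjOn A) u x := by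
    intro x h
    induction h with
    | refl => exact Relation.ReflTransGen.refl
    | tail hb hadj ih =>
      exact ih.tail ⟨Finset.mem_filter.2 ⟨hadj.1, hb⟩,
        Finset.mem_filter.2 ⟨hadj.2.1, hb.tail hadj⟩, hadj.2.2⟩
  refine ⟨⟨u, huA⟩, fun x hx y hy => ?_⟩
  exact (rtg_symm (key x (Finset.mem_filter.1 hx).2)).trans (key y (Finset.mem_filter.1 hy).2)

lemma ConnectedSet.of_induce {T X : Finset V} (h : (M.induce T).ConnectedSet X) :
    M.ConnectedSet X :=
  ⟨h.1, fun x hx y hy => Relation.ReflTransGen.mono (r := (M.induce T).AdjOn X) (p := M.AdjOn X)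
    (fun a b (hab : (M.induce T).AdjOn X a b) =>
      (⟨hab.1, hab.2.1, hab.2.2.elim fun e he => ⟨e.1, he⟩⟩ : M.AdjOn X a b)) x y (h.2 x hx y hy)⟩

lemma crossing_induce_card_le (T X Y : Finset V) :
    ((M.induce T).crossing X Y).card ≤ (M.crossing X Y).card := by
  apply Finset.card_le_card_of_injOn (fun e => e.1)
  · intro e he
    simp only [crossing, Finset.mem_filter, Finset.mem_univ, true_and] at he ⊢
    exact Finset.mem_coe.2 (Finset.mem_filter.2 ⟨Finset.mem_univ _,
      (Finset.mem_filter.1 (Finset.mem_coe.1 he)).2⟩)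
  · intro a _ b _ h
    exact Subtype.ext h

end Helpers

section Specific

variable {V : Type} [Fintype V] [DecidableEq V]
variable {G : Multigraph V} {c : ℕ} {K : Finset V} {u v : V} {huv : u ≠ v} {S : Finset V}

lemma adjOn_lift {X : Finset V} {a b : V}
    (h : ((G.outK K u v).induce Sᶜ).AdjOn X a b) :
    (((G.outK K u v).addPar u v huv c).induce Sᶜ).AdjOn X a b := by
  obtain ⟨ha, hb, e, he⟩ := h
  exact ⟨ha, hb, ⟨⟨Sum.inl e.1, e.2⟩, he⟩⟩

lemma connected_lift {X : Finset V}
    (h : ((G.outK K u v).induce Sᶜ).ConnectedSet X) :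
    (((G.outK K u v).addPar u v huv c).induce Sᶜ).ConnectedSet X :=
  ⟨h.1, fun x hx y hy =>
    Relation.ReflTransGen.mono (r := ((G.outK K u v).induce Sᶜ).AdjOn X)
      (p := (((G.outK K u v).addPar u v huv c).induce Sᶜ).AdjOn X)
      (fun _ _ hab => adjOn_lift hab) x y (h.2 x hx y hy)⟩

lemma adjOn_drop {X : Finset V} (hX : ¬ (u ∈ X ∧ v ∈ X)) {a b : V}
    (h : (((G.outK K u v).addPar u v huv c).induce Sᶜ).AdjOn X a b) :
    ((G.outK K u v).induce Sᶜ).AdjOn X a b := by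
  obtain ⟨ha, hb, ⟨f, hf⟩, he⟩ := h
  cases f with
  | inl e0 => exact ⟨ha, hb, ⟨⟨e0, hf⟩, he⟩⟩
  | inr j =>
    exfalso
    have h2 : s(u, v) = s(a, b) := he
    rcases Sym2.eq_iff.1 h2 with ⟨h1', h2'⟩ | ⟨h1', h2'⟩
    · subst h1'; subst h2'; exact hX ⟨ha, hb⟩
    · subst h1'; subst h2'; exact hX ⟨hb, ha⟩

lemma connected_drop {X : Finset V} (hX : ¬ (u ∈ X ∧ v ∈ X))
    (h : (((G.outK K u v).addPar u v huv c).induce Sᶜ).ConnectedSet X) :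
    ((G.outK K u v).induce Sᶜ).ConnectedSet X :=
  ⟨h.1, fun x hx y hy =>
    Relation.ReflTransGen.mono (r := (((G.outK K u v).addPar u v huv c).induce Sᶜ).AdjOn X)
      (p := ((G.outK K u v).induce Sᶜ).AdjOn X)
      (fun _ _ hab => adjOn_drop hX hab) x y (h.2 x hx y hy)⟩

lemma reach_dichotomy {X : Finset V} {x : V}
    (h : Relation.ReflTransGen
      ((((G.outK K u v).addPar u v huv c).induce Sᶜ).AdjOn X) u x) :
    Relation.ReflTransGen (((G.outK K u v).induce Sᶜ).AdjOn X) u x ∨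
      Relation.ReflTransGen (((G.outK K u v).induce Sᶜ).AdjOn X) v x := by
  induction h with
  | refl => exact Or.inl Relation.ReflTransGen.refl
  | tail hb hadj ih =>
    obtain ⟨ha', hb', ⟨f, hf⟩, he⟩ := hadj
    cases f with
    | inl e0 =>
      rcases ih with h' | h'
      · exact Or.inl (h'.tail ⟨ha', hb', ⟨⟨e0, hf⟩, he⟩⟩)
      · exact Or.inr (h'.tail ⟨ha', hb', ⟨⟨e0, hf⟩, he⟩⟩)
    | inr j =>
      have h2 : s(u, v) = _ := he
      rcases Sym2.eq_iff.1 h2 with ⟨h1', h2'⟩ | ⟨h1', h2'⟩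
      · rw [← h2']; exact Or.inr Relation.ReflTransGen.refl
      · rw [← h1']; exact Or.inl Relation.ReflTransGen.refl

/-- The canonical lift of an edge of `K^{(u,v)} - S` into `G'' - S`. -/
noncomputable def liftE (G : Multigraph V) (K : Finset V) (u v : V) (huv : u ≠ v) (c : ℕ)
    (S : Finset V) (e : ((G.outK K u v).induce Sᶜ).E) :
    (((G.outK K u v).addPar u v huv c).induce Sᶜ).E :=
  ⟨Sum.inl e.1, e.2⟩

lemma liftE_inj : Function.Injective (liftE G K u v huv c S) := fun a b hab =>
  Subtype.ext (Sum.inl_injective (congrArg Subtype.val hab))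

/-- The crossing edges of `G''-S` between `X` and `Y` that are parallel edges. -/
noncomputable def parCross (G : Multigraph V) (K : Finset V) (u v : V) (huv : u ≠ v) (c : ℕ)
    (S : Finset V) (X Y : Finset V) :
    Finset ((((G.outK K u v).addPar u v huv c).induce Sᶜ).E) :=
  ((((G.outK K u v).addPar u v huv c).induce Sᶜ).crossing X Y).filter
    (fun e => ∃ j : Fin c, e.1 = Sum.inr j)

lemma mem_parCross {X Y : Finset V} {e : (((G.outK K u v).addPar u v huv c).induce Sᶜ).E} :
    e ∈ parCross G K u v huv c S X Y ↔
      e ∈ (((G.outK K u v).addPar u v huv c).induce Sᶜ).crossing X Y ∧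
        ∃ j : Fin c, e.1 = Sum.inr j := by
  unfold parCross
  rw [Finset.mem_filter]

lemma crossing_split_le (X Y : Finset V) :
    ((((G.outK K u v).addPar u v huv c).induce Sᶜ).crossing X Y).card ≤
      (((G.outK K u v).induce Sᶜ).crossing X Y).card +
      (parCross G K u v huv c S X Y).card := by
  have hsub : (((G.outK K u v).addPar u v huv c).induce Sᶜ).crossing X Y ⊆
      ((((G.outK K u v).induce Sᶜ).crossing X Y).image (liftE G K u v huv c S)) ∪
      parCross G K u v huv c S X Y := by
    intro e he
    obtain ⟨f, hf⟩ := e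
    cases f with
    | inr j => exact Finset.mem_union_right _ (mem_parCross.2 ⟨he, j, rfl⟩)
    | inl e0 =>
      apply Finset.mem_union_left
      refine Finset.mem_image.2 ⟨⟨e0, hf⟩, ?_, rfl⟩
      simp only [crossing, Finset.mem_filter, Finset.mem_univ, true_and] at he ⊢
      exact Finset.mem_filter.2 ⟨Finset.mem_univ _, (Finset.mem_filter.1 he).2⟩
  refine le_trans (Finset.card_le_card hsub) (le_trans (Finset.card_union_le _ _) ?_)
  exact Nat.add_le_add_right (le_of_eq (Finset.card_image_of_injective _ liftE_inj)) _

lemma parCross_card_le (huS : u ∉ S) (hvS : v ∉ S) (X Y : Finset V) :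
    (parCross G K u v huv c S X Y).card ≤ c := by
  have hpar : ∀ w ∈ (s(u, v) : Sym2 V), w ∈ Sᶜ := by
    intro w hw
    rcases Sym2.mem_iff.1 hw with rfl | rfl
    · exact Finset.mem_compl.2 huS
    · exact Finset.mem_compl.2 hvS
  have h := Finset.card_le_card_of_surjOn
    (s := (Finset.univ : Finset (Fin c))) (t := parCross G K u v huv c S X Y)
    (fun j : Fin c => (⟨Sum.inr j, hpar⟩ :
      (((G.outK K u v).addPar u v huv c).induce Sᶜ).E))
    (by
      intro e he
      rw [Finset.mem_coe, mem_parCross] at he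
      obtain ⟨_, j, hj⟩ := he
      exact ⟨j, Finset.mem_coe.2 (Finset.mem_univ j), Subtype.ext hj.symm⟩)
  simpa using h

lemma parCross_empty {X Y : Finset V}
    (hns : ¬ ((u ∈ X ∧ v ∈ Y) ∨ (u ∈ Y ∧ v ∈ X))) :
    parCross G K u v huv c S X Y = ∅ := by
  rw [Finset.eq_empty_iff_forall_notMem]
  intro e he
  obtain ⟨hec, j, hj⟩ := mem_parCross.1 he
  simp only [crossing, Finset.mem_filter, Finset.mem_univ, true_and] at hec
  obtain ⟨x, hx, y, hy, hxy⟩ := hec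
  obtain ⟨f, hf⟩ := e
  cases hj
  have h2 : s(u, v) = s(x, y) := hxy
  rcases Sym2.eq_iff.1 h2 with ⟨h1', h2'⟩ | ⟨h1', h2'⟩
  · exact hns (Or.inl ⟨h1' ▸ hx, h2' ▸ hy⟩)
  · exact hns (Or.inr ⟨h1' ▸ hy, h2' ▸ hx⟩)

lemma crossing_ge (huS : u ∉ S) (hvS : v ∉ S) {X Y : Finset V}
    (huX : u ∈ X) (hvY : v ∈ Y) :
    (((G.outK K u v).induce Sᶜ).crossing X Y).card + c ≤
      ((((G.outK K u v).addPar u v huv c).induce Sᶜ).crossing X Y).card := by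
  have hpar : ∀ w ∈ (s(u, v) : Sym2 V), w ∈ Sᶜ := by
    intro w hw
    rcases Sym2.mem_iff.1 hw with rfl | rfl
    · exact Finset.mem_compl.2 huS
    · exact Finset.mem_compl.2 hvS
  set parE : Fin c → (((G.outK K u v).addPar u v huv c).induce Sᶜ).E :=
    fun j => ⟨Sum.inr j, hpar⟩ with hparE
  have hsub : ((((G.outK K u v).induce Sᶜ).crossing X Y).image (liftE G K u v huv c S)) ∪
      (Finset.univ.image parE) ⊆
      (((G.outK K u v).addPar u v huv c).induce Sᶜ).crossing X Y := by
    intro e he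
    rcases Finset.mem_union.1 he with he | he
    · obtain ⟨a, ha, rfl⟩ := Finset.mem_image.1 he
      simp only [crossing, Finset.mem_filter, Finset.mem_univ, true_and] at ha ⊢
      exact ha
    · obtain ⟨j, _, rfl⟩ := Finset.mem_image.1 he
      simp only [crossing, Finset.mem_filter, Finset.mem_univ, true_and]
      exact ⟨u, huX, v, hvY, rfl⟩
  have hdisj : Disjoint ((((G.outK K u v).induce Sᶜ).crossing X Y).image
      (liftE G K u v huv c S)) (Finset.univ.image parE) := by
    rw [Finset.disjoint_left]
    rintro e he1 he2
    obtain ⟨a, _, rfl⟩ := Finset.mem_image.1 he1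
    obtain ⟨j, _, heq⟩ := Finset.mem_image.1 he2
    have := congrArg Subtype.val heq
    simp [hparE, liftE] at this
  refine le_trans (le_of_eq ?_) (Finset.card_le_card hsub)
  rw [Finset.card_union_of_disjoint hdisj,
    Finset.card_image_of_injective _ liftE_inj,
    Finset.card_image_of_injective _
      (fun a b hab => Sum.inr_injective (congrArg Subtype.val hab) :
        Function.Injective parE),
    Finset.card_univ, Fintype.card_fin]

end Specific

section Main

variable {V : Type} [Fintype V] [DecidableEq V]
variable {G : Multigraph V} {c : ℕ} {K : Finset V} {u v : V} {huv : u ≠ v} {S : Finset V}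

lemma no_theta_base (hog : G.IsOutgrowth c K u v) {X Y : Finset V} (hd : Disjoint X Y)
    (hX : ((G.outK K u v).induce Sᶜ).ConnectedSet X)
    (hY : ((G.outK K u v).induce Sᶜ).ConnectedSet Y)
    (hcard : c ≤ (((G.outK K u v).induce Sᶜ).crossing X Y).card) : False :=
  hog.2.2.2.2.2.2.2.2 ⟨X, Y, hd, hX.of_induce, hY.of_induce,
    le_trans hcard (crossing_induce_card_le _ _ _)⟩

lemma aux_sameside (hog : G.IsOutgrowth c K u v) {i : ℕ} (hi : i < c)
    (hno : ¬ ∃ X Y : Finset V, ((G.outK K u v).induce Sᶜ).ThetaModel (i + 1) X Y ∧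
      u ∈ X ∧ v ∈ Y)
    {X Y : Finset V}
    (hmod : (((G.outK K u v).addPar u v huv c).induce Sᶜ).ThetaModel (c + i + 1) X Y)
    (huX : u ∈ X) (hvX : v ∈ X) : False := by
  obtain ⟨hd, hXc, hYc, hcard⟩ := hmod
  have huY : u ∉ Y := Finset.disjoint_left.1 hd huX
  have hvY : v ∉ Y := Finset.disjoint_left.1 hd hvX
  have hns : ¬ ((u ∈ X ∧ v ∈ Y) ∨ (u ∈ Y ∧ v ∈ X)) := by
    rintro (⟨-, h⟩ | ⟨h, -⟩)
    exacts [hvY h, huY h]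
  have hHS : c + i + 1 ≤ (((G.outK K u v).induce Sᶜ).crossing X Y).card := by
    have h1 := crossing_split_le (G := G) (K := K) (u := u) (v := v)
      (huv := huv) (c := c) (S := S) X Y
    rw [parCross_empty hns, Finset.card_empty, add_zero] at h1
    omega
  have hYc' : ((G.outK K u v).induce Sᶜ).ConnectedSet Y :=
    connected_drop (fun h => huY h.1) hYc
  set A := X.filter (fun x => Relation.ReflTransGen
    (((G.outK K u v).induce Sᶜ).AdjOn X) u x) with hA
  set B := X.filter (fun x => Relation.ReflTransGen
    (((G.outK K u v).induce Sᶜ).AdjOn X) v x) with hB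
  have huA : u ∈ A := Finset.mem_filter.2 ⟨huX, Relation.ReflTransGen.refl⟩
  have hvB : v ∈ B := Finset.mem_filter.2 ⟨hvX, Relation.ReflTransGen.refl⟩
  have hdi : ∀ x ∈ X, x ∈ A ∨ x ∈ B := by
    intro x hx
    rcases reach_dichotomy (hXc.2 u huX x hx) with h | h
    · exact Or.inl (Finset.mem_filter.2 ⟨hx, h⟩)
    · exact Or.inr (Finset.mem_filter.2 ⟨hx, h⟩)
  by_cases hreach : Relation.ReflTransGen (((G.outK K u v).induce Sᶜ).AdjOn X) u v
  · have hall : ∀ x ∈ X,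
        Relation.ReflTransGen (((G.outK K u v).induce Sᶜ).AdjOn X) u x := by
      intro x hx
      rcases hdi x hx with h | h
      · exact (Finset.mem_filter.1 h).2
      · exact hreach.trans (Finset.mem_filter.1 h).2
    have hXc' : ((G.outK K u v).induce Sᶜ).ConnectedSet X := by
      have h := connected_reach (M := (G.outK K u v).induce Sᶜ) huX
      rwa [Finset.filter_eq_self.2 hall] at h
    exact no_theta_base hog hd hXc' hYc' (le_trans (by omega) hHS)
  · have hAB : Disjoint A B := by
      rw [Finset.disjoint_left]
      intro x hxA hxB
      exact hreach (((Finset.mem_filter.1 hxA).2).trans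
        (rtg_symm (Finset.mem_filter.1 hxB).2))
    have hAc : ((G.outK K u v).induce Sᶜ).ConnectedSet A := connected_reach huX
    have hBc : ((G.outK K u v).induce Sᶜ).ConnectedSet B := connected_reach hvX
    have hAY : Disjoint A Y :=
      Finset.disjoint_of_subset_left (Finset.filter_subset _ _) hd
    have hBY : Disjoint B Y :=
      Finset.disjoint_of_subset_left (Finset.filter_subset _ _) hd
    have hsplit : (((G.outK K u v).induce Sᶜ).crossing X Y) ⊆
        ((G.outK K u v).induce Sᶜ).crossing A Y ∪
          ((G.outK K u v).induce Sᶜ).crossing B Y := by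
      intro e he
      simp only [crossing, Finset.mem_filter, Finset.mem_univ, true_and,
        Finset.mem_union] at he ⊢
      obtain ⟨x, hx, y, hy, hxy⟩ := he
      rcases hdi x hx with h | h
      · exact Or.inl ⟨x, h, y, hy, hxy⟩
      · exact Or.inr ⟨x, h, y, hy, hxy⟩
    have hsum : c + i + 1 ≤ (((G.outK K u v).induce Sᶜ).crossing A Y).card +
        (((G.outK K u v).induce Sᶜ).crossing B Y).card :=
      le_trans hHS (le_trans (Finset.card_le_card hsplit) (Finset.card_union_le _ _))
    by_cases hb0 : (((G.outK K u v).induce Sᶜ).crossing B Y).card = 0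
    · exact no_theta_base hog hAY hAc hYc' (by omega)
    by_cases ha0 : (((G.outK K u v).induce Sᶜ).crossing A Y).card = 0
    · exact no_theta_base hog hBY hBc hYc' (by omega)
    by_cases hA1 : i + 1 ≤ (((G.outK K u v).induce Sᶜ).crossing A Y).card
    · obtain ⟨e, he⟩ := Finset.card_pos.1 (Nat.pos_of_ne_zero hb0)
      simp only [crossing, Finset.mem_filter, Finset.mem_univ, true_and] at he
      obtain ⟨p, hp, q, hq, hpq⟩ := he
      have hBYc : ((G.outK K u v).induce Sᶜ).ConnectedSet (B ∪ Y) :=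
        connectedSet_union hBc hYc' hp hq ⟨e, hpq⟩
      refine hno ⟨A, B ∪ Y, ⟨Finset.disjoint_union_right.2 ⟨hAB, hAY⟩, hAc, hBYc, ?_⟩,
        huA, Finset.mem_union_left _ hvB⟩
      exact le_trans hA1 (Finset.card_le_card
        (crossing_mono_right Finset.subset_union_right _))
    · have hB1 : i + 1 ≤ (((G.outK K u v).induce Sᶜ).crossing B Y).card := by omega
      obtain ⟨e, he⟩ := Finset.card_pos.1 (Nat.pos_of_ne_zero ha0)
      simp only [crossing, Finset.mem_filter, Finset.mem_univ, true_and] at he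
      obtain ⟨p, hp, q, hq, hpq⟩ := he
      have hAYc : ((G.outK K u v).induce Sᶜ).ConnectedSet (A ∪ Y) :=
        connectedSet_union hAc hYc' hp hq ⟨e, hpq⟩
      have hcross : i + 1 ≤ (((G.outK K u v).induce Sᶜ).crossing (A ∪ Y) B).card := by
        rw [crossing_comm]
        exact le_trans hB1 (Finset.card_le_card
          (crossing_mono_right Finset.subset_union_right _))
      exact hno ⟨A ∪ Y, B, ⟨Finset.disjoint_union_left.2 ⟨hAB, hBY.symm⟩, hAYc, hBc,
        hcross⟩, Finset.mem_union_left _ huA, hvB⟩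

end Main

end Multigraph


/-- with (K,u,v) a c-outgrowth of G and G'' := K^{(u,v)} plus c
parallel u-v edges θ_{2c}-minor-free, for S ⊆ V(K) and i < c: K^{(u,v)} − S has no
θ_{i+1}-model separating u from v iff G'' − S is θ_{c+i+1}-minor-free. -/
theorem outgrowth_model_iff_parallel_free {V : Type} [Fintype V] [DecidableEq V]
    (G : Multigraph V) (c : ℕ) (K : Finset V) (u v : V) (huv : u ≠ v)
    (hog : G.IsOutgrowth c K u v)
    (hfree : ¬ ((G.outK K u v).addPar u v huv c).HasThetaMinor (2 * c))
    (S : Finset V) (hS : S ⊆ K) (i : ℕ) (hi : i < c) :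
    (¬ ∃ X Y : Finset V, ((G.outK K u v).induce Sᶜ).ThetaModel (i + 1) X Y ∧
        u ∈ X ∧ v ∈ Y) ↔
      ¬ (((G.outK K u v).addPar u v huv c).induce Sᶜ).HasThetaMinor (c + i + 1) := by
  have huK : u ∉ K := hog.2.1
  have hvK : v ∉ K := hog.2.2.1
  have huS : u ∉ S := fun h => huK (hS h)
  have hvS : v ∉ S := fun h => hvK (hS h)
  constructor
  · intro hno hmin
    obtain ⟨X, Y, hmod⟩ := hmin
    by_cases hsep : (u ∈ X ∧ v ∈ Y) ∨ (u ∈ Y ∧ v ∈ X)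
    · obtain ⟨hd, hXc, hYc, hcard⟩ := hmod
      rcases hsep with ⟨huX, hvY⟩ | ⟨huY, hvX⟩
      · have hvX : v ∉ X := Finset.disjoint_right.1 hd hvY
        have huY : u ∉ Y := Finset.disjoint_left.1 hd huX
        have hXc' := Multigraph.connected_drop (fun h => hvX h.2) hXc
        have hYc' := Multigraph.connected_drop (fun h => huY h.1) hYc
        have h1 := Multigraph.crossing_split_le (G := G) (K := K) (u := u) (v := v)
          (huv := huv) (c := c) (S := S) X Y
        have h2 := Multigraph.parCross_card_le (G := G) (K := K) (u := u) (v := v)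
          (huv := huv) (c := c) huS hvS X Y
        have h3 : i + 1 ≤ (((G.outK K u v).induce Sᶜ).crossing X Y).card := by omega
        exact hno ⟨X, Y, ⟨hd, hXc', hYc', h3⟩, huX, hvY⟩
      · have huX' : u ∉ X := Finset.disjoint_right.1 hd huY
        have hvY' : v ∉ Y := Finset.disjoint_left.1 hd hvX
        have hXc' := Multigraph.connected_drop (fun h => huX' h.1) hXc
        have hYc' := Multigraph.connected_drop (fun h => hvY' h.2) hYc
        have hcard' : c + i + 1 ≤
            ((((G.outK K u v).addPar u v huv c).induce Sᶜ).crossing Y X).card := by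
          rw [Multigraph.crossing_comm]
          exact hcard
        have h1 := Multigraph.crossing_split_le (G := G) (K := K) (u := u) (v := v)
          (huv := huv) (c := c) (S := S) Y X
        have h2 := Multigraph.parCross_card_le (G := G) (K := K) (u := u) (v := v)
          (huv := huv) (c := c) huS hvS Y X
        have h3 : i + 1 ≤ (((G.outK K u v).induce Sᶜ).crossing Y X).card := by omega
        exact hno ⟨Y, X, ⟨hd.symm, hYc', hXc', h3⟩, huY, hvX⟩
    · by_cases hX2 : u ∈ X ∧ v ∈ X
      · exact Multigraph.aux_sameside hog hi hno hmod hX2.1 hX2.2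
      by_cases hY2 : u ∈ Y ∧ v ∈ Y
      · obtain ⟨hd, hXc, hYc, hcard⟩ := hmod
        refine Multigraph.aux_sameside hog hi hno
          (X := Y) (Y := X) ⟨hd.symm, hYc, hXc, ?_⟩ hY2.1 hY2.2
        rw [Multigraph.crossing_comm]
        exact hcard
      · obtain ⟨hd, hXc, hYc, hcard⟩ := hmod
        have hXc' := Multigraph.connected_drop hX2 hXc
        have hYc' := Multigraph.connected_drop hY2 hYc
        have h1 := Multigraph.crossing_split_le (G := G) (K := K) (u := u) (v := v)
          (huv := huv) (c := c) (S := S) X Y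
        rw [Multigraph.parCross_empty hsep, Finset.card_empty, add_zero] at h1
        exact Multigraph.no_theta_base hog hd hXc' hYc' (by omega)
  · rintro hfree' ⟨X, Y, ⟨hd, hXc, hYc, hcard⟩, huX, hvY⟩
    refine hfree' ⟨X, Y, hd, Multigraph.connected_lift hXc,
      Multigraph.connected_lift hYc, ?_⟩
    have h1 := Multigraph.crossing_ge (G := G) (K := K) (huv := huv) (c := c)
      huS hvS huX hvY
    omega
end

section
/- Every graph obtained by gluing a θ_c-minor-free graph K^{(u,v)} with two boundary vertices u, v and adding at most c parallel edges between u and v is θ_{2c}-minor-free. -/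
open Finset

attribute [local instance] Classical.propDecidable

namespace Multigraph

variable {V : Type} [Fintype V] [DecidableEq V] (G : Multigraph V)

lemma adjV_symm' {x y : V} (h : G.AdjV x y) : G.AdjV y x := by
  obtain ⟨e, he⟩ := h
  exact ⟨e, by rw [he, Sym2.eq_swap]⟩

lemma adjOn_symm' (S : Finset V) : Symmetric (G.AdjOn S) := by
  rintro x y ⟨hx, hy, h⟩
  exact ⟨hy, hx, G.adjV_symm' h⟩

/-- The set of vertices reachable from `u` inside `S`. -/
noncomputable def reachSet (S : Finset V) (u : V) : Finset V :=
  Finset.univ.filter (fun x => Relation.ReflTransGen (G.AdjOn S) u x)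

lemma mem_reachSet {S : Finset V} {u x : V} :
    x ∈ G.reachSet S u ↔ Relation.ReflTransGen (G.AdjOn S) u x := by
  simp [reachSet]

lemma reachSet_subset {S : Finset V} {u : V} (hu : u ∈ S) :
    G.reachSet S u ⊆ S := by
  intro x hx
  rw [mem_reachSet] at hx
  induction hx with
  | refl => exact hu
  | tail _ h _ => exact h.2.1

lemma reach_in_reachSet {S : Finset V} {u x : V}
    (h : Relation.ReflTransGen (G.AdjOn S) u x) :
    Relation.ReflTransGen (G.AdjOn (G.reachSet S u)) u x := by
  induction h with
  | refl => exact Relation.ReflTransGen.refl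
  | tail h1 h2 ih =>
    exact ih.tail ⟨G.mem_reachSet.2 h1, G.mem_reachSet.2 (h1.tail h2), h2.2.2⟩

lemma reachSet_connected {S : Finset V} {u : V} (hu : u ∈ S) :
    G.ConnectedSet (G.reachSet S u) := by
  refine ⟨⟨u, G.mem_reachSet.2 Relation.ReflTransGen.refl⟩, ?_⟩
  intro x hx y hy
  have hx' := G.reach_in_reachSet (G.mem_reachSet.1 hx)
  have hy' := G.reach_in_reachSet (G.mem_reachSet.1 hy)
  exact ((@Relation.ReflTransGen.stdSymm _ _ ⟨fun a b h => G.adjOn_symm' _ h⟩).symm _ _ hx').trans hy'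

lemma mem_crossing {X Y : Finset V} {e : G.E} :
    e ∈ G.crossing X Y ↔ ∃ x ∈ X, ∃ y ∈ Y, G.ends e = s(x, y) := by
  simp [crossing]

lemma crossing_mono_left {X' X Y : Finset V} (h : X' ⊆ X) :
    G.crossing X' Y ⊆ G.crossing X Y := by
  intro e he
  rw [mem_crossing] at he ⊢
  obtain ⟨x, hx, y, hy, hxy⟩ := he
  exact ⟨x, h hx, y, hy, hxy⟩

end Multigraph

namespace Multigraph

variable {V : Type} [Fintype V] [DecidableEq V] (G : Multigraph V)

lemma addPar_inl_crossing {u v : V} {huv : u ≠ v} {i : ℕ} {X Y : Finset V} {e : G.E} :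
    Sum.inl e ∈ (G.addPar u v huv i).crossing X Y ↔ e ∈ G.crossing X Y := by
  exact (mem_crossing (G := G.addPar u v huv i) (e := Sum.inl e)).trans (mem_crossing (G := G)).symm

lemma addPar_inr_crossing {u v : V} {huv : u ≠ v} {i : ℕ} {X Y : Finset V} {k : Fin i}
    (h : Sum.inr k ∈ (G.addPar u v huv i).crossing X Y) :
    (u ∈ X ∧ v ∈ Y) ∨ (v ∈ X ∧ u ∈ Y) := by
  have h := (mem_crossing (G := G.addPar u v huv i)).1 h
  obtain ⟨x, hx, y, hy, hxy⟩ := h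
  have : s(u, v) = s(x, y) := hxy
  rw [Sym2.eq_iff] at this
  rcases this with ⟨h1, h2⟩ | ⟨h1, h2⟩
  · exact Or.inl ⟨h1 ▸ hx, h2 ▸ hy⟩
  · exact Or.inr ⟨h2 ▸ hx, h1 ▸ hy⟩

lemma addPar_crossing_card_le {u v : V} {huv : u ≠ v} {i : ℕ} {X Y : Finset V} :
    ((G.addPar u v huv i).crossing X Y).card ≤ (G.crossing X Y).card + i := by
  have hsub : (G.addPar u v huv i).crossing X Y ⊆
      (G.crossing X Y).map ⟨Sum.inl, Sum.inl_injective⟩ ∪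
        (Finset.univ : Finset (Fin i)).map ⟨Sum.inr, Sum.inr_injective⟩ := by
    rintro (e | k) he
    · exact Finset.mem_union_left _ (Finset.mem_map_of_mem _ ((G.addPar_inl_crossing).1 he))
    · exact Finset.mem_union_right _ (Finset.mem_map_of_mem _ (Finset.mem_univ _))
  calc ((G.addPar u v huv i).crossing X Y).card
      ≤ _ := Finset.card_le_card hsub
    _ ≤ ((G.crossing X Y).map ⟨Sum.inl, Sum.inl_injective⟩).card +
        ((Finset.univ : Finset (Fin i)).map ⟨Sum.inr, Sum.inr_injective⟩).card :=
        Finset.card_union_le _ _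
    _ = (G.crossing X Y).card + i := by simp

/-- If `u,v` are not both in `S`, connectivity within `S` in the glued graph
reduces to connectivity in `G`. -/
lemma addPar_adjOn {u v : V} {huv : u ≠ v} {i : ℕ} {S : Finset V}
    (hS : ¬ (u ∈ S ∧ v ∈ S)) {x y : V}
    (h : (G.addPar u v huv i).AdjOn S x y) : G.AdjOn S x y := by
  obtain ⟨hx, hy, e, he⟩ := h
  rcases e with e | k
  · exact ⟨hx, hy, e, he⟩
  · exfalso
    have : s(u, v) = s(x, y) := he
    rw [Sym2.eq_iff] at this
    rcases this with ⟨h1, h2⟩ | ⟨h1, h2⟩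
    · subst h1; subst h2; exact hS ⟨hx, hy⟩
    · subst h1; subst h2; exact hS ⟨hy, hx⟩

lemma addPar_connected {u v : V} {huv : u ≠ v} {i : ℕ} {S : Finset V}
    (hS : ¬ (u ∈ S ∧ v ∈ S)) (h : (G.addPar u v huv i).ConnectedSet S) :
    G.ConnectedSet S := by
  refine ⟨h.1, fun x hx y hy => ?_⟩
  exact Relation.ReflTransGen.mono (fun a b hab => G.addPar_adjOn hS hab) _ _ (h.2 x hx y hy)

/-- If `u,v ∈ X` and `X` is connected in the glued graph, every vertex of `X`
is reachable from `u` or from `v` within `X` in `G`. -/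
lemma addPar_cover {u v : V} {huv : u ≠ v} {i : ℕ} {X : Finset V}
    {x : V} (h : Relation.ReflTransGen ((G.addPar u v huv i).AdjOn X) u x) :
    Relation.ReflTransGen (G.AdjOn X) u x ∨ Relation.ReflTransGen (G.AdjOn X) v x := by
  induction h with
  | refl => exact Or.inl Relation.ReflTransGen.refl
  | tail h1 h2 ih =>
    obtain ⟨ha, hb, e, he⟩ := h2
    rcases e with e | k
    · rcases ih with ih | ih
      · exact Or.inl (ih.tail ⟨ha, hb, e, he⟩)
      · exact Or.inr (ih.tail ⟨ha, hb, e, he⟩)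
    · have : s(u, v) = s(_, _) := he
      rw [Sym2.eq_iff] at this
      rcases this with ⟨h1', h2'⟩ | ⟨h1', h2'⟩
      · exact Or.inr (h2' ▸ Relation.ReflTransGen.refl)
      · exact Or.inl (h1' ▸ Relation.ReflTransGen.refl)

end Multigraph

namespace Multigraph

variable {V : Type} [Fintype V] [DecidableEq V] (G : Multigraph V)

lemma crossing_symm' (X Y : Finset V) : G.crossing X Y = G.crossing Y X := by
  ext e
  simp only [mem_crossing]
  constructor <;> rintro ⟨x, hx, y, hy, h⟩ <;>
    exact ⟨y, hy, x, hx, by rw [h, Sym2.eq_swap]⟩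

lemma thetaModel_symm {c : ℕ} {X Y : Finset V} (h : G.ThetaModel c X Y) :
    G.ThetaModel c Y X := by
  obtain ⟨h1, h2, h3, h4⟩ := h
  exact ⟨h1.symm, h3, h2, by rwa [crossing_symm']⟩

/-- The case where both `u` and `v` lie in the cluster `X`. -/
lemma addPar_case_both {c : ℕ} {u v : V} {huv : u ≠ v} {i : ℕ} {X Y : Finset V}
    (hmodel : (G.addPar u v huv i).ThetaModel (2 * c) X Y)
    (hu : u ∈ X) (hv : v ∈ X) : G.HasThetaMinor c := by
  obtain ⟨hdisj, hXconn, hYconn, hcard⟩ := hmodel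
  -- no parallel edge crosses, so all crossing edges come from `G`
  have hsub : (G.addPar u v huv i).crossing X Y ⊆
      (G.crossing X Y).map ⟨Sum.inl, Sum.inl_injective⟩ := by
    rintro (e | k) he
    · exact Finset.mem_map_of_mem _ ((G.addPar_inl_crossing).1 he)
    · exfalso
      rcases G.addPar_inr_crossing he with ⟨h1, h2⟩ | ⟨h1, h2⟩
      · exact (Finset.disjoint_left.1 hdisj hv) h2
      · exact (Finset.disjoint_left.1 hdisj hu) h2
  have hcardG : 2 * c ≤ (G.crossing X Y).card := by
    calc 2 * c ≤ ((G.addPar u v huv i).crossing X Y).card := hcard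
      _ ≤ ((G.crossing X Y).map ⟨Sum.inl, Sum.inl_injective⟩).card :=
          Finset.card_le_card hsub
      _ = (G.crossing X Y).card := Finset.card_map _
  set Xu := G.reachSet X u with hXu
  set Xv := G.reachSet X v with hXv
  have hcover : X ⊆ Xu ∪ Xv := by
    intro x hx
    rcases G.addPar_cover (hXconn.2 u hu x hx) with h | h
    · exact Finset.mem_union_left _ (G.mem_reachSet.2 h)
    · exact Finset.mem_union_right _ (G.mem_reachSet.2 h)
  have hcsub : G.crossing X Y ⊆ G.crossing Xu Y ∪ G.crossing Xv Y := by
    intro e he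
    rw [mem_crossing] at he
    obtain ⟨x, hx, y, hy, hxy⟩ := he
    rcases Finset.mem_union.1 (hcover hx) with h | h
    · exact Finset.mem_union_left _ (G.mem_crossing.2 ⟨x, h, y, hy, hxy⟩)
    · exact Finset.mem_union_right _ (G.mem_crossing.2 ⟨x, h, y, hy, hxy⟩)
  have hsum : 2 * c ≤ (G.crossing Xu Y).card + (G.crossing Xv Y).card := by
    calc 2 * c ≤ (G.crossing X Y).card := hcardG
      _ ≤ (G.crossing Xu Y ∪ G.crossing Xv Y).card := Finset.card_le_card hcsub
      _ ≤ _ := Finset.card_union_le _ _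
  -- `Y` avoids both `u` and `v`
  have hYconnG : G.ConnectedSet Y := by
    refine G.addPar_connected (fun h => ?_) hYconn
    exact (Finset.disjoint_left.1 hdisj hu) h.1
  have key : ∀ w ∈ X, c ≤ (G.crossing (G.reachSet X w) Y).card → G.HasThetaMinor c := by
    intro w hw hc
    refine ⟨G.reachSet X w, Y, ?_, G.reachSet_connected hw, hYconnG, hc⟩
    exact Finset.disjoint_of_subset_left (G.reachSet_subset hw) hdisj
  rcases le_or_gt c (G.crossing Xu Y).card with h | h
  · exact key u hu h
  · exact key v hv (by rw [← hXv]; omega)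

end Multigraph

/-- gluing at most c parallel u-v edges onto a θ_c-minor-free graph
with no u-v edge yields a θ_{2c}-minor-free graph. -/
theorem addPar_theta_free {V : Type} [Fintype V] [DecidableEq V]
    (G : Multigraph V) (c : ℕ) (u v : V) (huv : u ≠ v)
    (hnouv : ∀ e : G.E, G.ends e ≠ s(u, v))
    (hfree : ¬ G.HasThetaMinor c)
    (i : ℕ) (hi : i ≤ c) :
    ¬ (G.addPar u v huv i).HasThetaMinor (2 * c) := by
  rintro ⟨X, Y, hmodel⟩
  by_cases hXb : u ∈ X ∧ v ∈ X
  · exact hfree (G.addPar_case_both hmodel hXb.1 hXb.2)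
  by_cases hYb : u ∈ Y ∧ v ∈ Y
  · exact hfree (G.addPar_case_both (Multigraph.thetaModel_symm _ hmodel) hYb.1 hYb.2)
  obtain ⟨hdisj, hXconn, hYconn, hcard⟩ := hmodel
  have hle := G.addPar_crossing_card_le (huv := huv) (i := i) (X := X) (Y := Y)
  refine hfree ⟨X, Y, hdisj, G.addPar_connected hXb hXconn,
    G.addPar_connected hYb hYconn, by omega⟩
end
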